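/- arXiv:2006.10258 — 5 statements merged into one kernel-verified Lean document; each statement's English description precedes it below -/
import Mathlib

section
/- Let z_1, ..., z_n be vectors in ℝ^p and let γ ∈ ℝ^p satisfy 1 + γᵀz_i > 0 for every i and Σ_{i=1}^n z_i / (1 + γᵀz_i) = 0. Define w*_i = 1 / (n(1 + γᵀz_i)). Then for every vector of weights (w_1, ..., w_n) with w_i ≥ 0, Σ_{i=1}^n w_i = 1 and Σ_{i=1}^n w_i z_i = 0, one has Σ_{i=1}^n log(n w_i) ≤ Σ_{i=1}^n log(n w*_i) = − Σ_{i=1}^n log(1 + γᵀz_i) (with log(n w_i) interpreted as −∞ when w_i = 0). Consequently the supremum defining the profile empirical log-likelihood equals −n log n − Σ_{i=1}^n log(1 + γᵀz_i). -/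
open scoped BigOperators

/-- Extended-real logarithm: `log t`, interpreted as `⊥` (i.e. −∞) when `t = 0`. -/
noncomputable def elog (t : ℝ) : EReal := if t = 0 then ⊥ else ((Real.log t : ℝ) : EReal)

/-!
Write `Tᵢ = 1 + γᵀzᵢ`. Any feasible `w` satisfies `Σ wᵢ Tᵢ = Σ wᵢ = 1`, because `Σ wᵢ zᵢ = 0`
kills the `γ`-part. Hence the numbers `aᵢ = n wᵢ Tᵢ` sum to `n`, and `log a ≤ a - 1` gives
`Σ log(n wᵢ) + Σ log Tᵢ = Σ log aᵢ ≤ Σ (aᵢ - 1) = 0`. The Lagrange condition says that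
`w* = 1 / (n T)` is itself feasible, and `n w*ᵢ Tᵢ = 1` attains the bound. Dropping the
factor `n` inside the logarithms shifts every value by `-n log n`.
-/

open Finset Real

lemma EReal.coe_finset_sum {α : Type*} (s : Finset α) (f : α → ℝ) :
    ((∑ i ∈ s, f i : ℝ) : EReal) = ∑ i ∈ s, (f i : EReal) :=
  map_sum (⟨⟨Real.toEReal, EReal.coe_zero⟩, EReal.coe_add⟩ : ℝ →+ EReal) f s

lemma elog_zero : elog 0 = ⊥ := if_pos rfl

lemma elog_of_ne_zero {t : ℝ} (ht : t ≠ 0) : elog t = (log t : EReal) := if_neg ht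

lemma elog_mul {c : ℝ} (hc : c ≠ 0) (t : ℝ) : elog (c * t) = (log c : EReal) + elog t := by
  rcases eq_or_ne t 0 with rfl | ht
  · rw [mul_zero, elog_zero, EReal.add_bot]
  · rw [elog_of_ne_zero (mul_ne_zero hc ht), elog_of_ne_zero ht, Real.log_mul hc ht,
      EReal.coe_add]

section Fintype

variable {ι : Type*} [Fintype ι]

lemma sum_elog_of_ne_zero {a : ι → ℝ} (ha : ∀ i, a i ≠ 0) :
    ∑ i, elog (a i) = ((∑ i, log (a i) : ℝ) : EReal) := by
  rw [EReal.coe_finset_sum]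
  exact sum_congr rfl fun i _ => elog_of_ne_zero (ha i)

lemma sum_elog_of_eq_zero {a : ι → ℝ} {i : ι} (hi : a i = 0) : ∑ j, elog (a j) = ⊥ := by
  classical
  rw [← add_sum_erase _ _ (mem_univ i), hi, elog_zero, EReal.bot_add]

lemma sum_elog_inv {a : ι → ℝ} (ha : ∀ i, a i ≠ 0) :
    ∑ i, elog (a i)⁻¹ = ((-∑ i, log (a i) : ℝ) : EReal) := by
  rw [sum_elog_of_ne_zero fun i => inv_ne_zero (ha i), ← sum_neg_distrib]
  simp only [Real.log_inv]

lemma sum_elog_eq_add_sum_elog_mul {c : ℝ} (hc : c ≠ 0) (w : ι → ℝ) :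
    ∑ i, elog (w i) = ((-(Fintype.card ι * log c) : ℝ) : EReal) + ∑ i, elog (c * w i) := by
  have hsplit : ∀ i, elog (w i) = ((-log c : ℝ) : EReal) + elog (c * w i) := fun i => by
    rw [← Real.log_inv, ← elog_mul (inv_ne_zero hc), inv_mul_cancel_left₀ hc]
  rw [sum_congr rfl fun i _ => hsplit i, sum_add_distrib, ← EReal.coe_finset_sum, sum_const,
    card_univ, nsmul_eq_mul, mul_neg]

lemma sum_log_nonpos_of_sum_eq_card {a : ι → ℝ} (ha : ∀ i, 0 < a i)
    (hsum : ∑ i, a i = Fintype.card ι) : ∑ i, log (a i) ≤ 0 :=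
  calc ∑ i, log (a i) ≤ ∑ i, (a i - 1) := sum_le_sum fun i _ => log_le_sub_one_of_pos (ha i)
    _ = 0 := by simp [sum_sub_distrib, hsum]

lemma sum_elog_nonpos_of_sum_eq_card {a : ι → ℝ} (ha : ∀ i, 0 ≤ a i)
    (hsum : ∑ i, a i = Fintype.card ι) : ∑ i, elog (a i) ≤ 0 := by
  by_cases hzero : ∃ i, a i = 0
  · obtain ⟨i, hi⟩ := hzero
    rw [sum_elog_of_eq_zero hi]
    exact bot_le
  · push Not at hzero
    rw [sum_elog_of_ne_zero hzero, ← EReal.coe_zero, EReal.coe_le_coe_iff]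
    exact sum_log_nonpos_of_sum_eq_card (fun i => (ha i).lt_of_ne' (hzero i)) hsum

lemma sum_mul_one_add_dotProduct {R m : Type*} [CommSemiring R] [Fintype m] (γ : m → R)
    {z : ι → m → R} {w : ι → R} (hwz : ∑ i, w i • z i = 0) :
    ∑ i, w i * (1 + γ ⬝ᵥ z i) = ∑ i, w i := by
  have hγ : ∑ i, w i * (γ ⬝ᵥ z i) = 0 := by
    simpa [dotProduct_sum, dotProduct_smul] using congrArg (γ ⬝ᵥ ·) hwz
  simp only [mul_add, mul_one, sum_add_distrib, hγ, add_zero]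

variable {m : Type*} [Fintype m] {γ : m → ℝ} {z : ι → m → ℝ}

theorem sum_elog_card_mul_le (hT : ∀ i, 0 < 1 + γ ⬝ᵥ z i) {w : ι → ℝ} (hw0 : ∀ i, 0 ≤ w i)
    (hw1 : ∑ i, w i = 1) (hwz : ∑ i, w i • z i = 0) :
    ∑ i, elog (Fintype.card ι * w i) ≤ ((-∑ i, log (1 + γ ⬝ᵥ z i) : ℝ) : EReal) := by
  set T : ι → ℝ := fun i => 1 + γ ⬝ᵥ z i
  set n : ℝ := (Fintype.card ι : ℝ)
  have hsplit : ∀ i, elog (n * w i) = ((-log (T i) : ℝ) : EReal) + elog (n * w i * T i) :=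
    fun i => by
      rw [← Real.log_inv, ← elog_mul (inv_ne_zero (hT i).ne'), mul_comm _ (T i),
        inv_mul_cancel_left₀ (hT i).ne']
  have hsum : ∑ i, n * w i * T i = n := by
    simp only [mul_assoc, ← mul_sum, sum_mul_one_add_dotProduct γ hwz, hw1, T, mul_one]
  calc ∑ i, elog (n * w i)
      = ((-∑ i, log (T i) : ℝ) : EReal) + ∑ i, elog (n * w i * T i) := by
        rw [sum_congr rfl fun i _ => hsplit i, sum_add_distrib, ← EReal.coe_finset_sum,
          sum_neg_distrib]
    _ ≤ ((-∑ i, log (T i) : ℝ) : EReal) + 0 := by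
        gcongr
        exact sum_elog_nonpos_of_sum_eq_card
          (fun i => mul_nonneg (mul_nonneg (Nat.cast_nonneg _) (hw0 i)) (hT i).le) hsum
    _ = _ := add_zero _

noncomputable def elWeights (γ : m → ℝ) (z : ι → m → ℝ) (i : ι) : ℝ :=
  1 / (Fintype.card ι * (1 + γ ⬝ᵥ z i))

lemma card_mul_elWeights (γ : m → ℝ) (z : ι → m → ℝ) (i : ι) :
    Fintype.card ι * elWeights γ z i = (1 + γ ⬝ᵥ z i)⁻¹ := by
  have : (Fintype.card ι : ℝ) ≠ 0 := Nat.cast_ne_zero.mpr (Fintype.card_pos_iff.mpr ⟨i⟩).ne'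
  rw [elWeights, one_div, mul_inv, mul_inv_cancel_left₀ this]

lemma elWeights_pos (hT : ∀ i, 0 < 1 + γ ⬝ᵥ z i) (i : ι) : 0 < elWeights γ z i := by
  have : (0 : ℝ) < Fintype.card ι := Nat.cast_pos.mpr (Fintype.card_pos_iff.mpr ⟨i⟩)
  exact one_div_pos.mpr (mul_pos this (hT i))

lemma sum_elWeights [Nonempty ι] (hT : ∀ i, 0 < 1 + γ ⬝ᵥ z i)
    (hlag : ∑ i, (1 + γ ⬝ᵥ z i)⁻¹ • z i = 0) : ∑ i, elWeights γ z i = 1 := by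
  have hinv : ∑ i, (1 + γ ⬝ᵥ z i)⁻¹ = Fintype.card ι := by
    rw [← sum_mul_one_add_dotProduct γ hlag, sum_congr rfl fun i _ => inv_mul_cancel₀ (hT i).ne']
    simp
  have hn : (Fintype.card ι : ℝ) ≠ 0 := Nat.cast_ne_zero.mpr Fintype.card_ne_zero
  rw [← mul_right_inj' hn, mul_sum, sum_congr rfl fun i _ => card_mul_elWeights γ z i, hinv,
    mul_one]

lemma sum_elWeights_smul (hlag : ∑ i, (1 + γ ⬝ᵥ z i)⁻¹ • z i = 0) :
    ∑ i, elWeights γ z i • z i = 0 := by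
  simp only [elWeights, one_div, mul_inv, mul_smul]
  rw [← smul_sum, hlag, smul_zero]

lemma sum_elog_card_mul_elWeights (hT : ∀ i, 0 < 1 + γ ⬝ᵥ z i) :
    ∑ i, elog (Fintype.card ι * elWeights γ z i) =
      ((-∑ i, log (1 + γ ⬝ᵥ z i) : ℝ) : EReal) := by
  simp only [card_mul_elWeights]
  exact sum_elog_inv fun i => (hT i).ne'

theorem isGreatest_sum_elog [Nonempty ι] (hT : ∀ i, 0 < 1 + γ ⬝ᵥ z i)
    (hlag : ∑ i, (1 + γ ⬝ᵥ z i)⁻¹ • z i = 0) :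
    IsGreatest {L : EReal | ∃ w : ι → ℝ, (∀ i, 0 ≤ w i) ∧ ∑ i, w i = 1 ∧
        ∑ i, w i • z i = 0 ∧ L = ∑ i, elog (w i)}
      ((-(Fintype.card ι * log (Fintype.card ι)) - ∑ i, log (1 + γ ⬝ᵥ z i) : ℝ) : EReal) := by
  have hn : (Fintype.card ι : ℝ) ≠ 0 := Nat.cast_ne_zero.mpr Fintype.card_ne_zero
  have hsum : ∀ w : ι → ℝ, ∑ i, elog (w i) =
      ((-(Fintype.card ι * log (Fintype.card ι)) : ℝ) : EReal) +
        ∑ i, elog (Fintype.card ι * w i) :=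
    sum_elog_eq_add_sum_elog_mul hn
  rw [sub_eq_add_neg, EReal.coe_add]
  refine ⟨⟨elWeights γ z, fun i => (elWeights_pos hT i).le, sum_elWeights hT hlag,
    sum_elWeights_smul hlag, ?_⟩, ?_⟩
  · rw [hsum, sum_elog_card_mul_elWeights hT]
  · rintro L ⟨w, hw0, hw1, hwz, rfl⟩
    rw [hsum]
    gcongr
    exact sum_elog_card_mul_le hT hw0 hw1 hwz

end Fintype

/-- The weights w*_i = 1/(n(1+γᵀz_i)) maximize Σ log(n w_i) over all probability
vectors w with Σ w_i z_i = 0, the maximal value is −Σ log(1+γᵀz_i), and consequently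
the supremum defining the profile empirical log-likelihood (over Σ log w_i) equals
−n log n − Σ log(1+γᵀz_i). -/
theorem el_weights_optimal
    (n p : ℕ) (hn : 0 < n) (z : Fin n → (Fin p → ℝ)) (γ : Fin p → ℝ)
    (hpos : ∀ i, 0 < 1 + ∑ j, γ j * z i j)
    (hlag : ∑ i, (1 + ∑ j, γ j * z i j)⁻¹ • z i = 0)
    (wstar : Fin n → ℝ)
    (hwstar : ∀ i, wstar i = 1 / (n * (1 + ∑ j, γ j * z i j))) :
    (∀ w : Fin n → ℝ, (∀ i, 0 ≤ w i) → ∑ i, w i = 1 → ∑ i, w i • z i = 0 →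
        ∑ i, elog ((n : ℝ) * w i) ≤ ∑ i, elog ((n : ℝ) * wstar i))
    ∧ ∑ i, elog ((n : ℝ) * wstar i)
        = ((-∑ i, Real.log (1 + ∑ j, γ j * z i j) : ℝ) : EReal)
    ∧ sSup {L : EReal | ∃ w : Fin n → ℝ, (∀ i, 0 ≤ w i) ∧ ∑ i, w i = 1 ∧
          ∑ i, w i • z i = 0 ∧ L = ∑ i, elog (w i)}
        = ((-(n * Real.log n) - ∑ i, Real.log (1 + ∑ j, γ j * z i j) : ℝ) : EReal) := by
  have hwstar_eq : wstar = elWeights γ z := funext fun i => by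
    rw [hwstar i, elWeights, Fintype.card_fin]; rfl
  subst hwstar_eq
  have : Nonempty (Fin n) := ⟨⟨0, hn⟩⟩
  have hbound := fun w : Fin n → ℝ => sum_elog_card_mul_le hpos (w := w)
  have hvalue := sum_elog_card_mul_elWeights hpos
  have hgreatest := isGreatest_sum_elog hpos hlag
  rw [Fintype.card_fin] at hbound hvalue hgreatest
  exact ⟨fun w hw0 hw1 hwz => hvalue ▸ hbound w hw0 hw1 hwz, hvalue, hgreatest.isLUB.sSup_eq⟩
end

section
/- For every a > 0 and every z ∈ ℝ, the Laplace density satisfies the scale-mixture-of-normals identity (a/2) · exp(−a|z|) = ∫_0^∞ (2πs)^{−1/2} exp(−z²/(2s)) · (a²/2) exp(−a² s / 2) ds, where the mixing density (a²/2)exp(−a² s/2) is the exponential density with rate a²/2. -/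
/-!
Substituting `s = t ^ 2` turns the mixture integral into
`a ^ 2 / √(2π) * ∫₀^∞ exp (-a²t²/2 - z²/(2t²)) dt`, and completing the square gives
`a²t²/2 + z²/(2t²) = (a²/2) (t - c/t)² + a|z|` with `c = |z|/a`.
The Cauchy–Schlömilch substitution removes the `c/t`: `u = t - c/t` maps `(0, ∞)` onto `ℝ`
with `du = (1 + c/t²) dt`, and the reflection `t ↦ c/t` sends `u` to `-u` while turning
`dt` into `c/t² dt`, so `∫₀^∞ F((t - c/t)²) dt = ½ ∫_ℝ F(u²) du = ∫₀^∞ F(t²) dt`.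
What remains is the half-line Gaussian integral `√(2π) / (2a)`.
-/

open MeasureTheory Real Set

theorem hasDerivAt_sub_div (c : ℝ) {t : ℝ} (ht : t ≠ 0) :
    HasDerivAt (fun t => t - c / t) (1 + c / t ^ 2) t := by
  simpa [div_eq_mul_inv] using (hasDerivAt_id' t).fun_sub ((hasDerivAt_inv ht).const_mul c)

theorem strictMonoOn_sub_div {c : ℝ} (hc : 0 ≤ c) : StrictMonoOn (fun t => t - c / t) (Ioi 0) :=
  fun x hx _ _ hxy => by
    linarith [div_le_div_of_nonneg_left hc (show 0 < x from hx) hxy.le]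

theorem image_sub_div_Ioi {c : ℝ} (hc : 0 < c) : (fun t => t - c / t) '' Ioi 0 = univ := by
  refine eq_univ_of_forall fun y => ?_
  have hd : 0 ≤ y ^ 2 + 4 * c := by positivity
  have hroot : |y| < √(y ^ 2 + 4 * c) := by
    rw [← sqrt_sq_eq_abs]; exact sqrt_lt_sqrt (sq_nonneg y) (by linarith)
  have ht : 0 < y + √(y ^ 2 + 4 * c) := by linarith [neg_abs_le y]
  -- the positive root of `t ^ 2 - y * t - c`
  refine ⟨(y + √(y ^ 2 + 4 * c)) / 2, half_pos ht, ?_⟩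
  field_simp
  nlinarith [sq_sqrt hd]

theorem integral_comp_div_Ioi {E : Type*} [NormedAddCommGroup E] [NormedSpace ℝ E]
    (f : ℝ → E) {c : ℝ} (hc : 0 < c) :
    ∫ t in Ioi 0, (c / t ^ 2) • f (c / t) = ∫ t in Ioi 0, f t := by
  have himage : (fun t => c / t) '' Ioi 0 = Ioi 0 := by
    refine Subset.antisymm (image_subset_iff.2 fun t ht => div_pos hc ht) fun s hs => ?_
    exact ⟨c / s, div_pos hc hs, div_div_cancel₀ hc.ne'⟩
  have hderiv : ∀ t ∈ Ioi (0 : ℝ), HasDerivWithinAt (fun t => c / t) (-(c / t ^ 2)) (Ioi 0) t :=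
    fun t ht => by
      simpa [div_eq_mul_inv] using ((hasDerivAt_inv (ne_of_gt ht)).const_mul c).hasDerivWithinAt
  have hinj : InjOn (fun t => c / t) (Ioi 0) := fun x _ y _ h => by
    simpa [hc.ne'] using congrArg (c / ·) h
  have hjac := integral_image_eq_integral_abs_deriv_smul measurableSet_Ioi hderiv hinj f
  rw [himage] at hjac
  rw [hjac]
  refine setIntegral_congr_fun measurableSet_Ioi fun t ht => ?_
  rw [abs_neg, abs_of_nonneg (by positivity)]

theorem integral_comp_sq_sub_div_Ioi {F : ℝ → ℝ} (hF : Integrable fun x => F (x ^ 2))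
    {c : ℝ} (hc : 0 ≤ c) :
    ∫ t in Ioi 0, F ((t - c / t) ^ 2) = ∫ t in Ioi 0, F (t ^ 2) := by
  rcases hc.eq_or_lt with rfl | hc
  · simp
  let u : ℝ → ℝ := fun t => t - c / t
  have hderiv : ∀ t ∈ Ioi (0 : ℝ), HasDerivWithinAt u (1 + c / t ^ 2) (Ioi 0) t :=
    fun t ht => (hasDerivAt_sub_div c (ne_of_gt ht)).hasDerivWithinAt
  have hinj : InjOn u (Ioi 0) := (strictMonoOn_sub_div hc.le).injOn
  have himage : u '' Ioi 0 = univ := image_sub_div_Ioi hc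
  have habs : ∀ t : ℝ, |1 + c / t ^ 2| = 1 + c / t ^ 2 := fun t => abs_of_nonneg (by positivity)
  have hjac := integral_image_eq_integral_abs_deriv_smul measurableSet_Ioi hderiv hinj
    (fun x => F (x ^ 2))
  have hjac_int := integrableOn_image_iff_integrableOn_abs_deriv_smul measurableSet_Ioi hderiv
    hinj (fun x => F (x ^ 2))
  simp only [himage, habs, smul_eq_mul, Measure.restrict_univ, integrableOn_univ] at hjac hjac_int
  have hG := hjac_int.mp hF
  have hint : IntegrableOn (fun t => F (u t ^ 2)) (Ioi 0) := by
    have hbound : ∀ t : ℝ, ‖(1 + c / t ^ 2)⁻¹‖ ≤ 1 := fun t => by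
      rw [norm_inv, Real.norm_eq_abs, habs]
      exact inv_le_one_of_one_le₀ (le_add_of_nonneg_right (by positivity))
    have hbdd : IntegrableOn (fun t => (1 + c / t ^ 2)⁻¹ * ((1 + c / t ^ 2) * F (u t ^ 2)))
        (Ioi 0) :=
      hG.bdd_mul (by fun_prop : Measurable _).aestronglyMeasurable (.of_forall hbound)
    refine hbdd.congr_fun (fun t _ => inv_mul_cancel_left₀ ?_ _) measurableSet_Ioi
    positivity
  have hrefl : ∫ t in Ioi 0, c / t ^ 2 * F (u t ^ 2) = ∫ t in Ioi 0, F (u t ^ 2) := by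
    rw [← integral_comp_div_Ioi (fun t => F (u t ^ 2)) hc]
    refine setIntegral_congr_fun measurableSet_Ioi fun t ht => ?_
    have ht : t ≠ 0 := ne_of_gt ht
    have hu_inv : u (c / t) = -u t := by
      simp only [u]; field_simp; ring
    rw [smul_eq_mul, hu_inv, neg_sq]
  have hrest : ∫ t in Ioi 0, c / t ^ 2 * F (u t ^ 2)
      = (∫ t in Ioi 0, (1 + c / t ^ 2) * F (u t ^ 2)) - ∫ t in Ioi 0, F (u t ^ 2) := by
    rw [← integral_sub hG hint]
    exact setIntegral_congr_fun measurableSet_Ioi fun t _ => by ring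
  have hhalf := integral_comp_abs (f := fun x => F (x ^ 2))
  simp only [sq_abs] at hhalf
  change ∫ t in Ioi 0, F (u t ^ 2) = _
  linarith

theorem mixture_integrand_comp_sq {a : ℝ} (ha : 0 < a) (z : ℝ) {t : ℝ} (ht : 0 < t) :
    2 * t * ((2 * π * t ^ 2) ^ (-(1 : ℝ) / 2) * exp (-z ^ 2 / (2 * t ^ 2))
        * ((a ^ 2 / 2) * exp (-a ^ 2 * t ^ 2 / 2)))
      = a ^ 2 / √(2 * π) * exp (-a * |z|) * exp (-(a ^ 2 / 2) * (t - |z| / a / t) ^ 2) := by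
  have h2π : 0 < 2 * π := by positivity
  have hsqrt : (2 * π * t ^ 2) ^ (-(1 : ℝ) / 2) = (√(2 * π))⁻¹ * t⁻¹ := by
    rw [show -(1 : ℝ) / 2 = -(1 / 2) by norm_num, rpow_neg (by positivity), ← sqrt_eq_rpow,
      sqrt_mul h2π.le, sqrt_sq ht.le, mul_inv]
  have hsquare : exp (-a * |z|) * exp (-(a ^ 2 / 2) * (t - |z| / a / t) ^ 2)
      = exp (-z ^ 2 / (2 * t ^ 2)) * exp (-a ^ 2 * t ^ 2 / 2) := by
    rw [← exp_add, ← exp_add]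
    congr 1
    field_simp
    linear_combination (-1 : ℝ) * sq_abs z
  rw [hsqrt, mul_assoc (a ^ 2 / _), hsquare]
  field_simp

/-- Scale mixture of normals representation of the Laplace density:
(a/2)·exp(−a|z|) = ∫_0^∞ (2πs)^{−1/2} exp(−z²/(2s)) · (a²/2)exp(−a²s/2) ds. -/
theorem laplace_scale_mixture_of_normals
    (a : ℝ) (ha : 0 < a) (z : ℝ) :
    (a/2) * Real.exp (-a * |z|)
      = ∫ s in Set.Ioi (0:ℝ),
          (2 * Real.pi * s) ^ (-(1:ℝ)/2) * Real.exp (-z^2/(2*s))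
            * ((a^2/2) * Real.exp (-a^2 * s / 2)) := by
  rw [← integral_comp_rpow_Ioi_of_pos two_pos]
  calc (a / 2) * exp (-a * |z|)
      = a ^ 2 / √(2 * π) * exp (-a * |z|) * ∫ t in Ioi 0, exp (-(a ^ 2 / 2) * t ^ 2) := by
        rw [integral_gaussian_Ioi, show π / (a ^ 2 / 2) = 2 * π / a ^ 2 by field_simp,
          sqrt_div (by positivity), sqrt_sq ha.le]
        field_simp
    _ = a ^ 2 / √(2 * π) * exp (-a * |z|)
          * ∫ t in Ioi 0, exp (-(a ^ 2 / 2) * (t - |z| / a / t) ^ 2) := by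
        rw [integral_comp_sq_sub_div_Ioi (F := fun y => exp (-(a ^ 2 / 2) * y))
          (integrable_exp_neg_mul_sq (by positivity)) (by positivity)]
    _ = _ := by
        rw [← integral_const_mul]
        refine setIntegral_congr_fun measurableSet_Ioi fun t ht => ?_
        rw [← mixture_integrand_comp_sq ha z ht, rpow_two, smul_eq_mul]
        norm_num
end

section
/- Let λ₁ > 0, λ₂ > 0 and σ² > 0. Then there exists a constant C > 0, independent of θ, such that for all θ ∈ ℝ: exp(−(λ₁|θ| + λ₂θ²)/(2σ²)) = C · ∫_1^∞ (λ₂τ/(σ²(τ−1)))^{1/2} exp(−λ₂τθ²/(2σ²(τ−1))) · τ^{−1/2} exp(−τλ₁²/(8λ₂σ²)) dτ. That is, the elastic net prior exp(−(λ₁‖θ‖₁ + λ₂‖θ‖₂²)/(2σ²)) is, coordinatewise, a scale mixture of the normal kernel N(0, (λ₂τ/(σ²(τ−1)))^{−1}) with the truncated gamma mixing kernel τ^{−1/2} exp(−τλ₁²/(8λ₂σ²)) on (1, ∞). -/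
/-!
Substituting `τ = x² + 1` turns the mixture integral into
`2 √(λ₂/σ²) e^{-(A+B)} ∫₀^∞ exp(-(B x² + A / x²)) dx` with `A = λ₂θ²/(2σ²)` and
`B = λ₁²/(8λ₂σ²)`. The Cauchy–Schlömilch substitution `y = √B x - √A / x`, whose Jacobian is
symmetrised by the inversion `x ↦ √(A/B) / x`, evaluates the last integral as
`√(π/B) / 2 · e^{-2√(AB)}`, and `2√(AB) = λ₁|θ|/(2σ²)` is exactly the `l₁` part of the penalty.
-/

open MeasureTheory Real Set

section ChangeOfVariables

variable {E : Type*} [NormedAddCommGroup E] [NormedSpace ℝ E]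

theorem hasDerivAt_mul_sub_div (p q : ℝ) {x : ℝ} (hx : x ≠ 0) :
    HasDerivAt (fun x => q * x - p / x) (q + p / x ^ 2) x := by
  have h : HasDerivAt (fun y => q * y - p * y⁻¹) (q * 1 - p * -(x ^ 2)⁻¹) x :=
    ((hasDerivAt_id' x).const_mul q).sub ((hasDerivAt_inv hx).const_mul p)
  simpa only [div_eq_mul_inv, mul_one, mul_neg, sub_neg_eq_add] using h

variable {p q : ℝ}

theorem strictMonoOn_mul_sub_div (hp : 0 ≤ p) (hq : 0 < q) :
    StrictMonoOn (fun x => q * x - p / x) (Ioi 0) := by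
  intro x hx y hy hxy
  have : p / y ≤ p / x := div_le_div_of_nonneg_left hp hx hxy.le
  have : q * x < q * y := mul_lt_mul_of_pos_left hxy hq
  dsimp only
  linarith

theorem image_mul_sub_div_Ioi (hp : 0 < p) (hq : 0 < q) :
    (fun x => q * x - p / x) '' Ioi 0 = univ := by
  refine eq_univ_of_forall fun y => ?_
  -- the positive root of `q x² - y x - p = 0`
  set s := √(y ^ 2 + 4 * p * q)
  have hs : s ^ 2 = y ^ 2 + 4 * p * q := sq_sqrt (by positivity)
  have hys : 0 < y + s := by
    have : |y| < s := by
      rw [← sqrt_sq_eq_abs]; exact sqrt_lt_sqrt (sq_nonneg y) (by linarith [mul_pos hp hq])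
    linarith [neg_abs_le y]
  refine ⟨(y + s) / (2 * q), div_pos hys (by positivity), ?_⟩
  field_simp
  linear_combination hs

theorem integral_mul_add_div_sq_smul_comp_mul_sub_div (g : ℝ → E) (hp : 0 < p) (hq : 0 < q) :
    ∫ x in Ioi 0, (q + p / x ^ 2) • g (q * x - p / x) = ∫ y, g y := by
  have := integral_image_eq_integral_abs_deriv_smul measurableSet_Ioi
    (fun x hx => (hasDerivAt_mul_sub_div p q (ne_of_gt hx)).hasDerivWithinAt)
    (strictMonoOn_mul_sub_div hp.le hq).injOn g
  rw [image_mul_sub_div_Ioi hp hq, Measure.restrict_univ] at this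
  rw [this]
  refine setIntegral_congr_fun measurableSet_Ioi fun x _ => ?_
  rw [abs_of_pos (by positivity)]

theorem integrableOn_mul_add_div_sq_smul_comp_mul_sub_div_iff (g : ℝ → E) (hp : 0 < p)
    (hq : 0 < q) :
    IntegrableOn (fun x => (q + p / x ^ 2) • g (q * x - p / x)) (Ioi 0) ↔ Integrable g := by
  have := integrableOn_image_iff_integrableOn_abs_deriv_smul measurableSet_Ioi
    (fun x hx => (hasDerivAt_mul_sub_div p q (ne_of_gt hx)).hasDerivWithinAt)
    (strictMonoOn_mul_sub_div hp.le hq).injOn g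
  rw [image_mul_sub_div_Ioi hp hq, integrableOn_univ] at this
  rw [this]
  refine integrableOn_congr_fun (fun x _ => ?_) measurableSet_Ioi
  rw [abs_of_pos (by positivity)]

theorem integral_smul_comp_div_Ioi (f : ℝ → E) {c : ℝ} (hc : 0 < c) :
    ∫ x in Ioi 0, (c / x ^ 2) • f (c / x) = ∫ x in Ioi 0, f x := by
  have hderiv : ∀ x ∈ Ioi (0 : ℝ), HasDerivWithinAt (fun x => c / x) (-(c / x ^ 2)) (Ioi 0) x :=
    fun x hx => by
      simpa [div_eq_mul_inv] using
        ((hasDerivAt_inv (ne_of_gt hx)).const_mul c).hasDerivWithinAt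
  have hinj : InjOn (fun x => c / x) (Ioi 0) := fun x _ y _ h =>
    inv_injective (mul_left_cancel₀ hc.ne' (by simpa [div_eq_mul_inv] using h))
  have himage : (fun x => c / x) '' Ioi 0 = Ioi 0 := by
    refine (image_subset_iff.2 fun x hx => div_pos hc hx).antisymm fun y hy => ?_
    exact ⟨c / y, div_pos hc hy, div_div_cancel₀ hc.ne'⟩
  have := integral_image_eq_integral_abs_deriv_smul measurableSet_Ioi hderiv hinj f
  rw [himage] at this
  rw [this]
  refine setIntegral_congr_fun measurableSet_Ioi fun x (hx : 0 < x) => ?_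
  rw [abs_neg, abs_of_pos (by positivity)]


theorem integral_comp_mul_sub_div_Ioi {g : ℝ → E} (hg : Integrable g)
    (hg_even : ∀ y, g (-y) = g y) (hp : 0 < p) (hq : 0 < q) :
    ∫ x in Ioi 0, g (q * x - p / x) = (2 * q)⁻¹ • ∫ y, g y := by
  have hpos : ∀ x : ℝ, 0 < q + p / x ^ 2 := fun x => by positivity
  have hJ : IntegrableOn (fun x => (q + p / x ^ 2) • g (q * x - p / x)) (Ioi 0) :=
    (integrableOn_mul_add_div_sq_smul_comp_mul_sub_div_iff g hp hq).2 hg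
  have hI : IntegrableOn (fun x => g (q * x - p / x)) (Ioi 0) := by
    have hc : Measurable fun x : ℝ => (q + p / x ^ 2)⁻¹ := by fun_prop
    refine IntegrableOn.congr_fun (hJ.bdd_smul q⁻¹ hc.aestronglyMeasurable
      (Filter.Eventually.of_forall fun x => ?_)) (fun x _ => ?_) measurableSet_Ioi
    · rw [norm_inv, Real.norm_of_nonneg (hpos x).le]
      exact inv_anti₀ hq (le_add_of_nonneg_right (by positivity))
    · rw [Pi.smul_apply', smul_smul, inv_mul_cancel₀ (hpos x).ne', one_smul]
  have hIq : IntegrableOn (fun x => q • g (q * x - p / x)) (Ioi 0) := hI.smul q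
  have hK : IntegrableOn (fun x => (p / x ^ 2) • g (q * x - p / x)) (Ioi 0) :=
    (hJ.sub hIq).congr_fun
      (fun x _ => by simp only [Pi.sub_apply, add_smul, add_sub_cancel_left]) measurableSet_Ioi
  -- the inversion `x ↦ (p / q) / x` reverses the sign of `q * x - p / x`
  have hK_eq : ∫ x in Ioi 0, (p / x ^ 2) • g (q * x - p / x)
      = q • ∫ x in Ioi 0, g (q * x - p / x) := by
    rw [← integral_smul_comp_div_Ioi _ (div_pos hp hq), ← integral_smul]
    refine setIntegral_congr_fun measurableSet_Ioi fun x hx => ?_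
    have hx : x ≠ 0 := ne_of_gt hx
    have : q * (p / q / x) - p / (p / q / x) = -(q * x - p / x) := by
      field_simp
      ring
    rw [this, hg_even, smul_smul]
    congr 1
    field_simp
  have hsplit : ∫ y, g y = (2 * q) • ∫ x in Ioi 0, g (q * x - p / x) := by
    rw [← integral_mul_add_div_sq_smul_comp_mul_sub_div g hp hq]
    simp_rw [add_smul]
    rw [integral_add hIq hK, integral_smul, hK_eq, two_mul, add_smul]
  rw [hsplit, smul_smul, inv_mul_cancel₀ (by positivity), one_smul]

theorem integral_Ioi_one_eq_integral_comp_sq_add_one (f : ℝ → E) :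
    ∫ τ in Ioi 1, f τ = ∫ x in Ioi 0, (2 * x) • f (x ^ 2 + 1) := by
  have hmono : StrictMonoOn (fun x : ℝ => x ^ 2 + 1) (Ioi 0) := fun x hx y _ hxy => by
    have : (0 : ℝ) < x := hx
    dsimp only
    nlinarith
  have himage : (fun x : ℝ => x ^ 2 + 1) '' Ioi 0 = Ioi 1 := by
    refine (image_subset_iff.2 fun x (hx : 0 < x) => ?_).antisymm fun τ (hτ : 1 < τ) => ?_
    · show 1 < x ^ 2 + 1
      nlinarith
    · refine ⟨√(τ - 1), sqrt_pos.2 (by linarith), ?_⟩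
      simp only [sq_sqrt (by linarith : 0 ≤ τ - 1), sub_add_cancel]
  have := integral_image_eq_integral_abs_deriv_smul measurableSet_Ioi
    (fun x _ => by simpa using ((hasDerivAt_pow 2 x).add_const 1).hasDerivWithinAt)
    hmono.injOn f
  rw [himage] at this
  rw [this]
  refine setIntegral_congr_fun measurableSet_Ioi fun x (hx : 0 < x) => ?_
  rw [abs_of_pos (by positivity)]

end ChangeOfVariables

theorem integral_exp_neg_mul_sq_add_div_sq {a b : ℝ} (ha : 0 ≤ a) (hb : 0 < b) :
    ∫ x in Ioi 0, exp (-(b * x ^ 2 + a / x ^ 2)) = √(π / b) / 2 * exp (-(2 * √(a * b))) := by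
  rcases ha.eq_or_lt with rfl | ha
  · simpa [neg_mul] using integral_gaussian_Ioi b
  have hp : 0 < √a := sqrt_pos.2 ha
  have hq : 0 < √b := sqrt_pos.2 hb
  have hsq : ∀ x ∈ Ioi (0 : ℝ), exp (-(b * x ^ 2 + a / x ^ 2))
      = exp (-(2 * √(a * b))) * exp (-(√b * x - √a / x) ^ 2) := fun x hx => by
    have hx : x ≠ 0 := ne_of_gt hx
    rw [← exp_add, sqrt_mul ha.le]
    congr 1
    field_simp
    linear_combination (sq_sqrt ha.le) + x ^ 4 * (sq_sqrt hb.le)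
  have hgauss := integral_comp_mul_sub_div_Ioi (g := fun y => exp (-y ^ 2))
    (by simpa using integrable_exp_neg_mul_sq one_pos) (fun y => by simp) hp hq
  rw [setIntegral_congr_fun measurableSet_Ioi hsq, integral_const_mul, hgauss,
    show ∫ y, exp (-y ^ 2) = √π by simpa using integral_gaussian 1, smul_eq_mul,
    sqrt_div pi_pos.le]
  field_simp

noncomputable def normalScaleKernel (l2 s2 θ τ : ℝ) : ℝ :=
  (l2 * τ / (s2 * (τ - 1))) ^ ((1 : ℝ) / 2) * exp (-(l2 * τ * θ ^ 2) / (2 * s2 * (τ - 1)))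

noncomputable def truncGammaKernel (l1 l2 s2 τ : ℝ) : ℝ :=
  τ ^ (-(1 : ℝ) / 2) * exp (-(τ * l1 ^ 2) / (8 * l2 * s2))

theorem mul_normalScaleKernel_mul_truncGammaKernel_sq_add_one {l1 l2 s2 x : ℝ} (θ : ℝ)
    (hl2 : 0 < l2) (hs2 : 0 < s2) (hx : 0 < x) :
    2 * x * (normalScaleKernel l2 s2 θ (x ^ 2 + 1) * truncGammaKernel l1 l2 s2 (x ^ 2 + 1))
      = 2 * √(l2 / s2) * exp (-(l2 * θ ^ 2 / (2 * s2) + l1 ^ 2 / (8 * l2 * s2)))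
        * exp (-(l1 ^ 2 / (8 * l2 * s2) * x ^ 2 + l2 * θ ^ 2 / (2 * s2) / x ^ 2)) := by
  have hτ : 0 < x ^ 2 + 1 := by positivity
  have hprec : l2 * (x ^ 2 + 1) / (s2 * (x ^ 2 + 1 - 1))
      = (√(l2 / s2) * √(x ^ 2 + 1) / x) ^ 2 := by
    rw [div_pow, mul_pow, sq_sqrt (by positivity), sq_sqrt hτ.le]
    field_simp
    ring
  have hexp : exp (-(l2 * (x ^ 2 + 1) * θ ^ 2) / (2 * s2 * (x ^ 2 + 1 - 1)))
        * exp (-((x ^ 2 + 1) * l1 ^ 2) / (8 * l2 * s2))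
      = exp (-(l2 * θ ^ 2 / (2 * s2) + l1 ^ 2 / (8 * l2 * s2)))
        * exp (-(l1 ^ 2 / (8 * l2 * s2) * x ^ 2 + l2 * θ ^ 2 / (2 * s2) / x ^ 2)) := by
    rw [← exp_add, ← exp_add]
    congr 1
    field_simp
    ring
  rw [normalScaleKernel, truncGammaKernel, hprec, ← sqrt_eq_rpow, sqrt_sq (by positivity),
    neg_div (2 : ℝ) 1, rpow_neg hτ.le, ← sqrt_eq_rpow, mul_assoc (2 * √(l2 / s2)), ← hexp]
  field_simp

theorem integral_normalScaleKernel_mul_truncGammaKernel {l1 l2 s2 : ℝ} (hl1 : 0 < l1)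
    (hl2 : 0 < l2) (hs2 : 0 < s2) (θ : ℝ) :
    ∫ τ in Ioi 1, normalScaleKernel l2 s2 θ τ * truncGammaKernel l1 l2 s2 τ
      = √(l2 / s2) * √(π / (l1 ^ 2 / (8 * l2 * s2))) * exp (-(l1 ^ 2 / (8 * l2 * s2)))
        * exp (-(l1 * |θ| + l2 * θ ^ 2) / (2 * s2)) := by
  set A := l2 * θ ^ 2 / (2 * s2)
  set B := l1 ^ 2 / (8 * l2 * s2)
  have hAB : √(A * B) = l1 * |θ| / (4 * s2) := by
    rw [← sqrt_sq (by positivity : 0 ≤ l1 * |θ| / (4 * s2))]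
    congr 1
    rw [div_pow, mul_pow, sq_abs]
    simp only [A, B]
    field_simp
    ring
  have hexp : -(A + B) + -(2 * (l1 * |θ| / (4 * s2)))
      = -B + -(l1 * |θ| + l2 * θ ^ 2) / (2 * s2) := by
    simp only [A, B]
    field_simp
    ring
  rw [integral_Ioi_one_eq_integral_comp_sq_add_one]
  simp only [smul_eq_mul]
  rw [setIntegral_congr_fun measurableSet_Ioi
      fun x hx => mul_normalScaleKernel_mul_truncGammaKernel_sq_add_one θ hl2 hs2 hx,
    integral_const_mul, integral_exp_neg_mul_sq_add_div_sq (by positivity) (by positivity), hAB]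
  calc 2 * √(l2 / s2) * exp (-(A + B)) * (√(π / B) / 2 * exp (-(2 * (l1 * |θ| / (4 * s2)))))
      = √(l2 / s2) * √(π / B) * exp (-(A + B) + -(2 * (l1 * |θ| / (4 * s2)))) := by
        rw [exp_add]; ring
    _ = _ := by rw [hexp, exp_add]; ring

/-- The elastic net prior kernel exp(−(λ₁|θ|+λ₂θ²)/(2σ²)) is, coordinatewise, a scale
mixture of the normal kernel N(0, (λ₂τ/(σ²(τ−1)))⁻¹) with the truncated gamma mixing
kernel τ^{−1/2} exp(−τλ₁²/(8λ₂σ²)) on (1,∞), up to a positive constant C. -/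
theorem elastic_net_prior_scale_mixture
    (l1 l2 s2 : ℝ) (h1 : 0 < l1) (h2 : 0 < l2) (hs : 0 < s2) :
    ∃ C : ℝ, 0 < C ∧ ∀ θ : ℝ,
      Real.exp (-(l1 * |θ| + l2 * θ^2) / (2 * s2))
        = C * ∫ τ in Set.Ioi (1:ℝ),
            (l2 * τ / (s2 * (τ - 1))) ^ ((1:ℝ)/2)
              * Real.exp (-(l2 * τ * θ^2) / (2 * s2 * (τ - 1)))
              * (τ ^ (-(1:ℝ)/2) * Real.exp (-(τ * l1^2) / (8 * l2 * s2))) := by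
  set B := l1 ^ 2 / (8 * l2 * s2)
  have hK : 0 < √(l2 / s2) * √(π / B) * exp (-B) := by
    have : 0 < B := by positivity
    have : 0 < π / B := by positivity
    positivity
  refine ⟨(√(l2 / s2) * √(π / B) * exp (-B))⁻¹, inv_pos.2 hK, fun θ => ?_⟩
  change _ = _ * ∫ τ in Ioi 1, normalScaleKernel l2 s2 θ τ * truncGammaKernel l1 l2 s2 τ
  rw [integral_normalScaleKernel_mul_truncGammaKernel h1 h2 hs, ← mul_assoc,
    inv_mul_cancel₀ hK.ne', one_mul]
end

section
/- Let λ₁ > 0, λ₂ > 0, σ² > 0 and θ ∈ ℝ. Then there exists a constant c > 0, independent of τ, such that for all τ > 1: (τ/(τ−1))^{1/2} exp(−λ₂τθ²/(2σ²(τ−1))) · τ^{−1/2} exp(−τλ₁²/(8λ₂σ²)) = c · (τ−1)^{−1/2} exp(−(1/2)( (λ₂θ²/σ²)/(τ−1) + (λ₁²/(4λ₂σ²))(τ−1) )). That is, as a function of τ, the full conditional kernel of τ in the hierarchical Bayesian elastic net model is proportional, after the shift s = τ − 1, to the kernel of the generalized inverse Gaussian distribution GIG(ν = 1/2, ψ =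 λ₁²/(4λ₂σ²), χ = λ₂θ²/σ²). -/
open Real

/-- The full conditional kernel of τ in the hierarchical Bayesian elastic net is
proportional, after the shift s = τ − 1, to the GIG(1/2, λ₁²/(4λ₂σ²), λ₂θ²/σ²) kernel. -/
theorem tau_full_conditional_is_GIG
    (l1 l2 s2 θ : ℝ) (h1 : 0 < l1) (h2 : 0 < l2) (hs : 0 < s2) :
    ∃ c : ℝ, 0 < c ∧ ∀ τ : ℝ, 1 < τ →
      (τ / (τ - 1)) ^ ((1:ℝ)/2) * Real.exp (-(l2 * τ * θ^2) / (2 * s2 * (τ - 1)))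
          * (τ ^ (-(1:ℝ)/2) * Real.exp (-(τ * l1^2) / (8 * l2 * s2)))
        = c * (τ - 1) ^ (-(1:ℝ)/2)
            * Real.exp (-(1/2) * ((l2 * θ^2 / s2) / (τ - 1)
                + (l1^2 / (4 * l2 * s2)) * (τ - 1))) := by
  refine ⟨Real.exp (-(l2 * θ^2) / (2 * s2) + -(l1^2) / (8 * l2 * s2)),
    Real.exp_pos _, ?_⟩
  intro τ hτ
  have h0 : (0:ℝ) < τ - 1 := by linarith
  have hτ0 : (0:ℝ) < τ := by linarith
  have hpow : (τ / (τ - 1)) ^ ((1:ℝ)/2) * τ ^ (-(1:ℝ)/2)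
      = (τ - 1) ^ (-(1:ℝ)/2) := by
    have e : (-(1:ℝ)/2) = -((1:ℝ)/2) := by ring
    rw [e, Real.div_rpow hτ0.le h0.le, Real.rpow_neg h0.le, Real.rpow_neg hτ0.le]
    have n1 := (Real.rpow_pos_of_pos hτ0 ((1:ℝ)/2)).ne'
    have n2 := (Real.rpow_pos_of_pos h0 ((1:ℝ)/2)).ne'
    field_simp
  have hexp : Real.exp (-(l2 * τ * θ^2) / (2 * s2 * (τ - 1)))
      * Real.exp (-(τ * l1^2) / (8 * l2 * s2))
      = Real.exp (-(l2 * θ^2) / (2 * s2) + -(l1^2) / (8 * l2 * s2))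
      * Real.exp (-(1/2) * ((l2 * θ^2 / s2) / (τ - 1)
          + (l1^2 / (4 * l2 * s2)) * (τ - 1))) := by
    rw [← Real.exp_add, ← Real.exp_add]
    congr 1
    field_simp
    ring
  calc (τ / (τ - 1)) ^ ((1:ℝ)/2) * Real.exp (-(l2 * τ * θ^2) / (2 * s2 * (τ - 1)))
          * (τ ^ (-(1:ℝ)/2) * Real.exp (-(τ * l1^2) / (8 * l2 * s2)))
      = ((τ / (τ - 1)) ^ ((1:ℝ)/2) * τ ^ (-(1:ℝ)/2))
          * (Real.exp (-(l2 * τ * θ^2) / (2 * s2 * (τ - 1)))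
            * Real.exp (-(τ * l1^2) / (8 * l2 * s2))) := by ring
    _ = _ := by rw [hpow, hexp]; ring
end

section
/- Let λ₁ > 0, σ² > 0, θ ∈ ℝ^p, τ_1, ..., τ_p with τ_j > 1 for all j, and GIG prior hyperparameters ν₂ ∈ ℝ, ψ₂ > 0, χ₂ > 0. Then there exists a constant c > 0, independent of l, such that for all l > 0: [Π_{j=1}^p (lτ_j/(σ²(τ_j−1)))^{1/2} exp(−lτ_jθ_j²/(2σ²(τ_j−1)))] · [Π_{j=1}^p (λ₁²/(8lσ²))^{1/2} exp(−τ_jλ₁²/(8lσ²))] · l^{ν₂−1} exp(−(1/2)(χ₂/l + ψ₂ l)) = c · l^{ν₂−1} exp(−(1/2)[ (Σ_{j=1}^p (τ_j/(τ_j−1))θ_j²/σ² + ψ₂) l + (Σ_{j=1}^p τ_jλ₁²/(4σ²) + χ₂)/l ]). That is, under a GIG(ν₂, ψ₂, χ₂) prior on λ₂, the full conditional of λ₂ is GIG(ν = ν₂, ψ = Σ_j (τ_j/(τ_j−1))θ_j²/σ² + ψ₂, χ = Σ_j τ_jλ₁²/(4σ²) + χ₂), so the GIG prior is conjugate for λ₂.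 -/
open Real Finset

/-!
Each normal kernel is a constant times `λ₂^{1/2} exp(-λ₂ a_j / 2)` and each truncated
gamma kernel a constant times `λ₂^{-1/2} exp(-b_j / (2 λ₂))`. The powers of `λ₂` cancel in
pairs, and the exponents add `Σ a_j` to `ψ₂` and `Σ b_j` to `χ₂` in the GIG prior kernel.
-/

lemma prod_mul_mul_exp {ι : Type*} [Fintype ι] (a x : ι → ℝ) (r k : ℝ) :
    ∏ j, a j * r * exp (k * x j) = (∏ j, a j) * r ^ Fintype.card ι * exp (k * ∑ j, x j) := by
  rw [mul_sum, exp_sum, prod_mul_distrib, prod_mul_distrib, prod_const, card_univ]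

lemma normal_kernel_eq {l s2 t θ : ℝ} (hl : 0 ≤ l) (hs : 0 < s2) (ht : 1 < t) :
    (l * t / (s2 * (t - 1))) ^ ((1:ℝ)/2) * exp (-(l * t * θ^2) / (2 * s2 * (t - 1)))
      = (t / (s2 * (t - 1))) ^ ((1:ℝ)/2) * l ^ ((1:ℝ)/2)
          * exp (-(1/2) * l * ((t / (t - 1)) * θ^2 / s2)) := by
  have ht1 : 0 < t - 1 := sub_pos.2 ht
  rw [mul_div_assoc, mul_rpow hl (by positivity), mul_comm (l ^ _)]
  congr 2
  field_simp

lemma gamma_kernel_eq {l s2 t l1 : ℝ} (hl : 0 ≤ l) (hs : 0 ≤ s2) :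
    (l1^2 / (8 * l * s2)) ^ ((1:ℝ)/2) * exp (-(t * l1^2) / (8 * l * s2))
      = (l1^2 / (8 * s2)) ^ ((1:ℝ)/2) * (l ^ ((1:ℝ)/2))⁻¹
          * exp (-(1/2) / l * (t * l1^2 / (4 * s2))) := by
  rw [← inv_rpow hl, ← mul_rpow (by positivity) (inv_nonneg.2 hl)]
  ring_nf

theorem lambda2_full_conditional_is_GIG_general
    (p : ℕ) (l1 s2 : ℝ) (h1 : 0 < l1) (hs : 0 < s2)
    (θ τ : Fin p → ℝ) (hτ : ∀ j, 1 < τ j)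
    (ν2 ψ2 χ2 : ℝ) :
    ∃ c : ℝ, 0 < c ∧ ∀ l : ℝ, 0 < l →
      (∏ j, (l * τ j / (s2 * (τ j - 1))) ^ ((1:ℝ)/2)
          * Real.exp (-(l * τ j * (θ j)^2) / (2 * s2 * (τ j - 1))))
        * (∏ j, (l1^2 / (8 * l * s2)) ^ ((1:ℝ)/2)
            * Real.exp (-(τ j * l1^2) / (8 * l * s2)))
        * (l ^ (ν2 - 1) * Real.exp (-(1/2) * (χ2 / l + ψ2 * l)))
      = c * l ^ (ν2 - 1)
          * Real.exp (-(1/2) * ((∑ j, (τ j / (τ j - 1)) * (θ j)^2 / s2 + ψ2) * l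
              + (∑ j, τ j * l1^2 / (4 * s2) + χ2) / l)) := by
  have hnormal_const : ∀ j, 0 < (τ j / (s2 * (τ j - 1))) ^ ((1:ℝ)/2) := fun j =>
    rpow_pos_of_pos (div_pos (one_pos.trans (hτ j)) (mul_pos hs (sub_pos.2 (hτ j)))) _
  refine ⟨(∏ j, (τ j / (s2 * (τ j - 1))) ^ ((1:ℝ)/2))
      * ∏ _j : Fin p, (l1^2 / (8 * s2)) ^ ((1:ℝ)/2),
    mul_pos (prod_pos fun j _ => hnormal_const j) (by positivity), fun l hl => ?_⟩
  rw [prod_congr rfl fun j _ => normal_kernel_eq hl.le hs (hτ j),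
    prod_congr rfl fun j _ => gamma_kernel_eq (t := τ j) hl.le hs.le,
    prod_mul_mul_exp, prod_mul_mul_exp]
  have hexp : exp (-(1/2) * ((∑ j, (τ j / (τ j - 1)) * (θ j)^2 / s2 + ψ2) * l
      + (∑ j, τ j * l1^2 / (4 * s2) + χ2) / l))
      = exp (-(1/2) * l * ∑ j, (τ j / (τ j - 1)) * (θ j)^2 / s2)
        * exp (-(1/2) / l * ∑ j, τ j * l1^2 / (4 * s2))
        * exp (-(1/2) * (χ2 / l + ψ2 * l)) := by
    rw [← exp_add, ← exp_add]
    congr 1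
    ring
  have hroot : l ^ ((1:ℝ)/2) ≠ 0 := (rpow_pos_of_pos hl _).ne'
  rw [hexp, inv_pow]
  field_simp

/-- Under a GIG(ν₂, ψ₂, χ₂) prior on λ₂ = l, the full conditional of λ₂ is
GIG(ν₂, Σ_j (τ_j/(τ_j−1))θ_j²/σ² + ψ₂, Σ_j τ_jλ₁²/(4σ²) + χ₂): the GIG prior is
conjugate for λ₂. -/
theorem lambda2_full_conditional_is_GIG
    (p : ℕ) (l1 s2 : ℝ) (h1 : 0 < l1) (hs : 0 < s2)
    (θ τ : Fin p → ℝ) (hτ : ∀ j, 1 < τ j)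
    (ν2 ψ2 χ2 : ℝ) (hψ : 0 < ψ2) (hχ : 0 < χ2) :
    ∃ c : ℝ, 0 < c ∧ ∀ l : ℝ, 0 < l →
      (∏ j, (l * τ j / (s2 * (τ j - 1))) ^ ((1:ℝ)/2)
          * Real.exp (-(l * τ j * (θ j)^2) / (2 * s2 * (τ j - 1))))
        * (∏ j, (l1^2 / (8 * l * s2)) ^ ((1:ℝ)/2)
            * Real.exp (-(τ j * l1^2) / (8 * l * s2)))
        * (l ^ (ν2 - 1) * Real.exp (-(1/2) * (χ2 / l + ψ2 * l)))
      = c * l ^ (ν2 - 1)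
          * Real.exp (-(1/2) * ((∑ j, (τ j / (τ j - 1)) * (θ j)^2 / s2 + ψ2) * l
              + (∑ j, τ j * l1^2 / (4 * s2) + χ2) / l)) :=
  lambda2_full_conditional_is_GIG_general p l1 s2 h1 hs θ τ hτ ν2 ψ2 χ2
end
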